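/- For every n ≥ 1 and all formulas φ, χ_1, …, χ_n of L(∇,•), the formula Δ((χ_1 ∧ ⋯ ∧ χ_n) → φ) ∧ ∘(¬φ→χ_1) ∧ ⋯ ∧ ∘(¬φ→χ_n) ∧ φ → Δφ is derivable in the proof system K^{∇•}. -/
import Mathlib


inductive Form : Type
  | atom : Nat → Form
  | neg : Form → Form
  | and : Form → Form → Form
  | nabla : Form → Form
  | bull : Form → Form

namespace Form
def imp (φ ψ : Form) : Form := neg (and φ (neg ψ))
def orf (φ ψ : Form) : Form := neg (and (neg φ) (neg ψ))
def ifff (φ ψ : Form) : Form := and (imp φ ψ) (imp ψ φ)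
def delta (φ : Form) : Form := neg (nabla φ)
def circ (φ : Form) : Form := neg (bull φ)
end Form

structure Model (W : Type) where
  R : W → W → Prop
  V : Nat → W → Prop

def sat {W : Type} (M : Model W) : W → Form → Prop
  | s, .atom n => M.V n s
  | s, .neg φ => ¬ sat M s φ
  | s, .and φ ψ => sat M s φ ∧ sat M s ψ
  | s, .nabla φ => ∃ t u, M.R s t ∧ M.R s u ∧ sat M t φ ∧ ¬ sat M u φ
  | s, .bull φ => sat M s φ ∧ ∃ t, M.R s t ∧ ¬ sat M t φ

/-- Boolean evaluation treating atoms, `∇φ` and `•φ` as propositional atoms;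
used to express "instance of a propositional tautology". -/
def evalT (v : Form → Bool) : Form → Bool
  | .neg φ => !(evalT v φ)
  | .and φ ψ => evalT v φ && evalT v ψ
  | φ => v φ

/-- `φ` is an instance of a propositional tautology. -/
def Taut (φ : Form) : Prop := ∀ v : Form → Bool, evalT v φ = true

/-- Derivability in the minimal system `K^{∇•}`. -/
inductive Prov : Form → Prop
  | a0 : ∀ φ, Taut φ → Prov φ
  | a1 : ∀ φ, Prov (Form.imp (.bull φ) φ)
  | a2 : ∀ φ, Prov (Form.ifff (.nabla φ) (.nabla (.neg φ)))
  | a3 : ∀ φ ψ, Prov (Form.imp (.and (.bull (Form.imp ψ φ)) φ) (.bull φ))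
  | a4 : ∀ φ ψ, Prov (Form.imp (.nabla (.and φ ψ)) (Form.orf (.nabla φ) (.nabla ψ)))
  | a5 : ∀ φ ψ, Prov (Form.imp (.bull (.and φ ψ)) (Form.orf (.bull φ) (.bull ψ)))
  | a6 : ∀ φ, Prov (Form.imp (.nabla φ) (Form.orf (.bull φ) (.bull (.neg φ))))
  | a7 : ∀ φ ψ χ, Prov (Form.imp (.and (.bull (Form.imp φ ψ)) (.bull (Form.imp (.neg φ) χ))) (.nabla φ))
  | r1 : ∀ φ, Prov φ → Prov (Form.delta φ)
  | r2 : ∀ φ, Prov φ → Prov (Form.circ φ)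
  | r3 : ∀ φ ψ, Prov (Form.ifff φ ψ) → Prov (Form.ifff (Form.delta φ) (Form.delta ψ))
  | r4 : ∀ φ ψ, Prov (Form.ifff φ ψ) → Prov (Form.ifff (Form.circ φ) (Form.circ ψ))
  | mp : ∀ φ ψ, Prov (Form.imp φ ψ) → Prov φ → Prov ψ

/-- `bigAnd [χ₁, …, χₙ] = χ₁ ∧ ⋯ ∧ χₙ` (for nonempty lists). -/
def bigAnd : List Form → Form
  | [] => Form.neg (Form.and (Form.atom 0) (Form.neg (Form.atom 0)))
  | [φ] => φ
  | φ :: ψ :: rest => Form.and φ (bigAnd (ψ :: rest))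
section Aux

@[simp] lemma evalT_neg (v : Form → Bool) (φ : Form) : evalT v (.neg φ) = !(evalT v φ) := rfl
@[simp] lemma evalT_and (v : Form → Bool) (φ ψ : Form) : evalT v (.and φ ψ) = (evalT v φ && evalT v ψ) := rfl
@[simp] lemma evalT_nabla (v : Form → Bool) (φ : Form) : evalT v (.nabla φ) = v (.nabla φ) := rfl
@[simp] lemma evalT_bull (v : Form → Bool) (φ : Form) : evalT v (.bull φ) = v (.bull φ) := rfl
@[simp] lemma evalT_atom (v : Form → Bool) (n : Nat) : evalT v (.atom n) = v (.atom n) := rfl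

lemma evalT_bigAnd (v : Form → Bool) : ∀ l : List Form, evalT v (bigAnd l) = l.all (evalT v)
  | [] => by simp [bigAnd]
  | [φ] => by simp [bigAnd]
  | φ :: ψ :: r => by
      simp only [bigAnd, evalT_and, evalT_bigAnd v (ψ :: r), List.all_cons]

lemma mp1 {p q : Form} (t : Taut (p.imp q)) (hp : Prov p) : Prov q :=
  Prov.mp _ _ (Prov.a0 _ t) hp

lemma mp2 {p q r : Form} (t : Taut (p.imp (q.imp r))) (hp : Prov p) (hq : Prov q) : Prov r :=
  Prov.mp _ _ (mp1 t hp) hq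

lemma nabla_cong {a b : Form} (h : Prov (a.ifff b)) :
    Prov ((Form.nabla a).ifff (Form.nabla b)) := by
  refine mp1 ?_ (Prov.r3 a b h)
  intro v
  simp only [Form.imp, Form.ifff, Form.delta, evalT_neg, evalT_and, evalT_nabla]
  generalize v (Form.nabla a) = x
  generalize v (Form.nabla b) = y
  revert x y; decide

lemma bull_cong {a b : Form} (h : Prov (a.ifff b)) :
    Prov ((Form.bull a).ifff (Form.bull b)) := by
  refine mp1 ?_ (Prov.r4 a b h)
  intro v
  simp only [Form.imp, Form.ifff, Form.circ, evalT_neg, evalT_and, evalT_bull]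
  generalize v (Form.bull a) = x
  generalize v (Form.bull b) = y
  revert x y; decide

/-- φ ↔ θ ∧ (θ → φ) is a tautology when θ = B → φ. -/
lemma taut_T1 (φ B : Form) :
    Taut (φ.ifff ((Form.imp B φ).and (Form.imp (Form.imp B φ) φ))) := by
  intro v
  simp only [Form.imp, Form.ifff, evalT_neg, evalT_and]
  generalize evalT v φ = f
  generalize evalT v B = b
  revert f b; decide

lemma all_or (f : Bool) (e : Form → Bool) :
    ∀ l : List Form, l.all (fun c => f || e c) = (f || l.all e) := by
  intro l
  cases f with
  | false => simp
  | true => simp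

/-- (θ → φ) ↔ ⋀ᵢ (¬φ → χᵢ) is a tautology when θ = ⋀χ → φ. -/
lemma taut_T2 (φ : Form) (l : List Form) :
    Taut ((Form.imp (Form.imp (bigAnd l) φ) φ).ifff
      (bigAnd (l.map (fun c => Form.imp (Form.neg φ) c)))) := by
  intro v
  simp only [Form.imp, Form.ifff, evalT_neg, evalT_and, evalT_bigAnd, List.all_map,
    Function.comp_def]
  have : (fun x => !(!evalT v φ && !evalT v x)) = fun x => (evalT v φ || evalT v x) := by
    funext x
    generalize evalT v φ = f; generalize evalT v x = a
    revert f a; decide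
  rw [this, all_or]
  generalize evalT v φ = f
  generalize (l.all (evalT v)) = b
  revert f b; decide

lemma taut_step (c X M : Form) :
    Taut ((M.imp (Form.circ X)).imp
      (((Form.bull (c.and X)).imp ((Form.bull c).orf (Form.bull X))).imp
        (((Form.circ c).and M).imp (Form.circ (c.and X))))) := by
  intro v
  simp only [Form.imp, Form.orf, Form.circ, evalT_neg, evalT_and, evalT_bull]
  generalize evalT v M = m
  generalize v (Form.bull c) = x
  generalize v (Form.bull X) = y
  generalize v (Form.bull (c.and X)) = z
  revert m x y z; decide

/-- ⋀ᵢ ∘cᵢ → ∘(⋀ᵢ cᵢ), for a nonempty list. -/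
lemma circ_bigAnd : ∀ (c : Form) (l : List Form),
    Prov ((bigAnd ((c :: l).map Form.circ)).imp (Form.circ (bigAnd (c :: l))))
  | c, [] => by
      refine Prov.a0 _ ?_
      intro v
      simp only [List.map, bigAnd, Form.imp, Form.circ, evalT_neg, evalT_and, evalT_bull]
      generalize v (Form.bull c) = x
      revert x; decide
  | c, d :: r => by
      have ih := circ_bigAnd d r
      have h5 := Prov.a5 c (bigAnd (d :: r))
      exact mp2 (taut_step c (bigAnd (d :: r)) (bigAnd ((d :: r).map Form.circ))) ih h5

/-- The big final propositional combination. -/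
lemma taut_final (φ B D Dc : Form) :
    Taut
      (Form.imp ((Form.nabla φ).ifff (Form.nabla ((Form.imp B φ).and (Form.imp (Form.imp B φ) φ))))
      (Form.imp ((Form.nabla ((Form.imp B φ).and (Form.imp (Form.imp B φ) φ))).imp
          ((Form.nabla (Form.imp B φ)).orf (Form.nabla (Form.imp (Form.imp B φ) φ))))
      (Form.imp ((Form.nabla (Form.imp (Form.imp B φ) φ)).imp
          ((Form.bull (Form.imp (Form.imp B φ) φ)).orf
            (Form.bull (Form.neg (Form.imp (Form.imp B φ) φ)))))
      (Form.imp ((Form.bull (Form.neg (Form.imp (Form.imp B φ) φ))).imp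
          (Form.neg (Form.imp (Form.imp B φ) φ)))
      (Form.imp (((Form.bull (Form.imp (Form.imp B φ) φ)).ifff (Form.bull D)))
      (Form.imp (Dc.imp (Form.circ D))
      (Form.imp
        (Form.and (Form.delta (Form.imp B φ)) (Form.and Dc φ)) (Form.delta φ)))))))) := by
  intro v
  simp only [Form.imp, Form.ifff, Form.orf, Form.delta, Form.circ,
    evalT_neg, evalT_and, evalT_nabla, evalT_bull]
  generalize v (Form.nabla φ) = p
  generalize v (Form.nabla (Form.and (Form.neg (Form.and B (Form.neg φ)))
    (Form.neg (Form.and (Form.neg (Form.and B (Form.neg φ))) (Form.neg φ))))) = q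
  generalize v (Form.nabla (Form.neg (Form.and B (Form.neg φ)))) = r
  generalize v (Form.nabla (Form.neg (Form.and (Form.neg (Form.and B (Form.neg φ))) (Form.neg φ)))) = s
  generalize v (Form.bull (Form.neg (Form.and (Form.neg (Form.and B (Form.neg φ))) (Form.neg φ)))) = t
  generalize v (Form.bull (Form.neg (Form.neg (Form.and (Form.neg (Form.and B (Form.neg φ))) (Form.neg φ))))) = u
  generalize v (Form.bull D) = w
  generalize evalT v φ = f
  generalize evalT v B = b
  generalize evalT v Dc = dc
  revert p q r s t u w f b dc
  decide

end Aux

theorem stmt10 (n : ℕ) (hn : 1 ≤ n) (φ : Form) (χ : Fin n → Form) :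
    Prov (Form.imp
      (.and (Form.delta (Form.imp (bigAnd (List.ofFn χ)) φ))
        (.and (bigAnd ((List.ofFn χ).map (fun c => Form.circ (Form.imp (.neg φ) c))))
          φ))
      (Form.delta φ)) := by
  rcases hL : List.ofFn χ with _ | ⟨c, r⟩
  · exfalso
    have := congrArg List.length hL
    simp at this
    omega
  · set l : List Form := c :: r with hl
    set B : Form := bigAnd l with hB
    set f : Form → Form := fun c => Form.imp (Form.neg φ) c with hf
    set D : Form := bigAnd (l.map f) with hD
    set Dc : Form := bigAnd (l.map (fun c => Form.circ (Form.imp (.neg φ) c))) with hDc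
    -- F1 : ∇φ ↔ ∇(θ ∧ (θ→φ))
    have F1 := nabla_cong (Prov.a0 _ (taut_T1 φ B))
    have F2 := Prov.a4 (Form.imp B φ) (Form.imp (Form.imp B φ) φ)
    have F3 := Prov.a6 (Form.imp (Form.imp B φ) φ)
    have F4 := Prov.a1 (Form.neg (Form.imp (Form.imp B φ) φ))
    have F5 := bull_cong (Prov.a0 _ (taut_T2 φ l))
    have F6 : Prov (Dc.imp (Form.circ D)) := by
      have h := circ_bigAnd (f c) (r.map f)
      have hmap : (f c :: r.map f) = l.map f := by simp [hl]
      rw [hmap] at h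
      have hmap2 : ((l.map f).map Form.circ) = l.map (fun c => Form.circ (Form.imp (.neg φ) c)) := by
        simp [List.map_map, hf, Function.comp_def]
      rw [hmap2] at h
      exact h
    exact Prov.mp _ _ (Prov.mp _ _ (Prov.mp _ _ (Prov.mp _ _ (Prov.mp _ _ (Prov.mp _ _
      (Prov.a0 _ (taut_final φ B D Dc)) F1) F2) F3) F4) F5) F6
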